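/- arXiv:1701.03428 — 5 statements merged into one kernel-verified Lean document; each statement's English description precedes it below -/
import Mathlib

section
/- For positive real numbers a, b and ν ∈ [0,1], with h = b/a and r = min{ν, 1−ν}, one has K(h)^r · a^(1−ν) b^ν ≤ (1−ν)a + νb, where K(h) = (h+1)²/(4h) is the Kantorovich constant. -/
/-!
Since `Kc (b / a) * (a * b) = ((a + b) / 2) ^ 2`, for `ν ≤ 1/2` the left-hand side equals
`((a + b) / 2) ^ (2ν) * a ^ (1 - 2ν)`, and the weighted AM-GM inequality with weights `2ν`, `1 - 2ν`
bounds it by `ν (a + b) + (1 - 2ν) a = (1 - ν) a + ν b`. The case `ν ≥ 1/2` is the same after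
swapping `a` with `b` and `ν` with `1 - ν`, because `Kc x⁻¹ = Kc x`.
-/

/-- The Kantorovich constant. -/
noncomputable def Kc (x : ℝ) : ℝ := (x + 1) ^ 2 / (4 * x)

open Real

lemma Kc_inv (x : ℝ) : Kc x⁻¹ = Kc x := by
  rcases eq_or_ne x 0 with rfl | hx
  · simp
  · unfold Kc
    field_simp
    ring

lemma Kc_div_mul_mul {a b : ℝ} (ha : a ≠ 0) (hb : b ≠ 0) :
    Kc (b / a) * (a * b) = ((a + b) / 2) ^ 2 := by
  unfold Kc
  field_simp
  ring

lemma Kc_div_rpow_mul_geom_mean_le {a b ν : ℝ} (ha : 0 < a) (hb : 0 < b) (hν₀ : 0 ≤ ν)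
    (hν : ν ≤ 1 / 2) :
    Kc (b / a) ^ ν * (a ^ (1 - ν) * b ^ ν) ≤ (1 - ν) * a + ν * b := by
  have hK : 0 ≤ Kc (b / a) := by unfold Kc; positivity
  have hm : 0 ≤ (a + b) / 2 := by positivity
  have hlhs : Kc (b / a) ^ ν * (a ^ (1 - ν) * b ^ ν) = ((a + b) / 2) ^ (2 * ν) * a ^ (1 - 2 * ν) :=
    calc Kc (b / a) ^ ν * (a ^ (1 - ν) * b ^ ν)
        = (Kc (b / a) * (a * b)) ^ ν * a ^ (1 - 2 * ν) := by
          rw [mul_rpow hK (by positivity), mul_rpow ha.le hb.le,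
            show 1 - ν = ν + (1 - 2 * ν) by ring, rpow_add ha]
          ring
      _ = ((a + b) / 2) ^ (2 * ν) * a ^ (1 - 2 * ν) := by
          rw [Kc_div_mul_mul ha.ne' hb.ne', ← rpow_natCast, ← rpow_mul hm]
          norm_num
  calc Kc (b / a) ^ ν * (a ^ (1 - ν) * b ^ ν)
      = ((a + b) / 2) ^ (2 * ν) * a ^ (1 - 2 * ν) := hlhs
    _ ≤ 2 * ν * ((a + b) / 2) + (1 - 2 * ν) * a :=
        geom_mean_le_arith_mean2_weighted (by linarith) (by linarith) hm ha.le (by ring)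
    _ = (1 - ν) * a + ν * b := by ring

theorem stmt0 (a b ν : ℝ) (ha : 0 < a) (hb : 0 < b) (hν : ν ∈ Set.Icc (0:ℝ) 1) :
    Kc (b / a) ^ (min ν (1 - ν)) * (a ^ (1 - ν) * b ^ ν) ≤ (1 - ν) * a + ν * b := by
  obtain ⟨hν₀, hν₁⟩ := hν
  rcases le_total ν (1 / 2) with hν | hν
  · rw [min_eq_left (by linarith)]
    exact Kc_div_rpow_mul_geom_mean_le ha hb hν₀ hν
  · rw [min_eq_right (by linarith)]
    have h := Kc_div_rpow_mul_geom_mean_le hb ha (ν := 1 - ν) (by linarith) (by linarith)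
    rw [← Kc_inv, inv_div, sub_sub_cancel] at h
    linarith [mul_comm (a ^ (1 - ν)) (b ^ ν)]
end

section
/- Let A, B be bounded positive invertible operators on a Hilbert space with 0 < m ≤ B ≤ m' < M' ≤ A ≤ M. Then for each ν ∈ [0,1], K(h')^r · (A⁻¹ #_ν B⁻¹) ≤ (1−ν)A⁻¹ + νB⁻¹, where r = min{ν, 1−ν}, h' = M'/m', and A #_ν B = A^{1/2}(A^{−1/2} B A^{−1/2})^ν A^{1/2} is the weighted geometric mean. -/
/-- The weighted operator geometric mean `A #_ν B`. -/
noncomputable def sharp {𝒜 : Type*} [CStarAlgebra 𝒜] [PartialOrder 𝒜] [StarOrderedRing 𝒜] (ν : ℝ) (a b : 𝒜) : 𝒜 :=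
  CFC.rpow a (1/2) * CFC.rpow (CFC.rpow a (-(1/2)) * b * CFC.rpow a (-(1/2))) ν * CFC.rpow a (1/2)

open Set CFC

lemma Kc_inv_s2 (t : ℝ) : Kc t⁻¹ = Kc t := by
  rcases eq_or_ne t 0 with rfl | ht
  · simp
  · unfold Kc
    field_simp
    ring

lemma Kc_le_Kc {h t : ℝ} (hh : 1 ≤ h) (hht : h ≤ t) : Kc h ≤ Kc t := by
  unfold Kc
  rw [div_le_div_iff₀ (by positivity) (by linarith)]
  -- `(t + 1) ^ 2 * h - (h + 1) ^ 2 * t = (t - h) * (t * h - 1)`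
  have hth : 1 ≤ t * h := one_le_mul_of_one_le_of_one_le (hh.trans hht) hh
  nlinarith [mul_nonneg (sub_nonneg.2 hht) (sub_nonneg.2 hth)]

lemma Kc_mul_eq_sq {t : ℝ} (ht : t ≠ 0) : Kc t * t = ((t + 1) / 2) ^ 2 := by
  unfold Kc
  field_simp
  ring

lemma Kc_rpow_mul_rpow_le_of_le_half {t ν : ℝ} (ht : 0 < t) (hν0 : 0 ≤ ν) (hν : ν ≤ 1 / 2) :
    Kc t ^ ν * t ^ ν ≤ 1 - ν + ν * t := by
  have hK : 0 ≤ Kc t := by unfold Kc; positivity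
  rw [← Real.mul_rpow hK ht.le, Kc_mul_eq_sq ht.ne', ← Real.rpow_natCast,
    ← Real.rpow_mul (by positivity)]
  calc ((t + 1) / 2) ^ ((2 : ℕ) * ν) = (1 + (t - 1) / 2) ^ (2 * ν) := by push_cast; ring_nf
    _ ≤ 1 + 2 * ν * ((t - 1) / 2) :=
      rpow_one_add_le_one_add_mul_self (by linarith) (by linarith) (by linarith)
    _ = 1 - ν + ν * t := by ring

lemma Kc_rpow_min_mul_rpow_le {t ν : ℝ} (ht : 0 < t) (hν : ν ∈ Icc (0 : ℝ) 1) :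
    Kc t ^ min ν (1 - ν) * t ^ ν ≤ 1 - ν + ν * t := by
  obtain ⟨hν0, hν1⟩ := hν
  rcases le_total ν (1 / 2) with hν2 | hν2
  · rw [min_eq_left (by linarith)]
    exact Kc_rpow_mul_rpow_le_of_le_half ht hν0 hν2
  · rw [min_eq_right (by linarith)]
    have key := Kc_rpow_mul_rpow_le_of_le_half (inv_pos.2 ht) (by linarith)
      (by linarith : 1 - ν ≤ 1 / 2)
    have ht' : t ^ ν = t * t⁻¹ ^ (1 - ν) := by
      rw [Real.inv_rpow ht.le, ← div_eq_mul_inv, ← Real.rpow_one_sub' ht.le (by linarith),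
        sub_sub_cancel]
    calc Kc t ^ (1 - ν) * t ^ ν = t * (Kc t⁻¹ ^ (1 - ν) * t⁻¹ ^ (1 - ν)) := by
          rw [ht', Kc_inv_s2]; ring
      _ ≤ t * (1 - (1 - ν) + (1 - ν) * t⁻¹) := mul_le_mul_of_nonneg_left key ht.le
      _ = 1 - ν + ν * t := by field_simp; ring

lemma Kc_rpow_min_mul_rpow_le_of_le {h t ν : ℝ} (hh : 1 ≤ h) (hht : h ≤ t)
    (hν : ν ∈ Icc (0 : ℝ) 1) :
    Kc h ^ min ν (1 - ν) * t ^ ν ≤ 1 - ν + ν * t := by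
  have ht : 0 < t := by linarith
  have hr : 0 ≤ min ν (1 - ν) := le_min hν.1 (by linarith [hν.2])
  calc Kc h ^ min ν (1 - ν) * t ^ ν ≤ Kc t ^ min ν (1 - ν) * t ^ ν := by
        gcongr
        · unfold Kc; positivity
        · exact Kc_le_Kc hh hht
    _ ≤ 1 - ν + ν * t := Kc_rpow_min_mul_rpow_le ht hν

section CStarAlgebra

variable {𝒜 : Type*} [CStarAlgebra 𝒜] [PartialOrder 𝒜] [StarOrderedRing 𝒜]

lemma Kc_rpow_min_smul_rpow_le {x : 𝒜} {h ν : ℝ} (hh : 1 ≤ h) (hhx : h • 1 ≤ x)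
    (hν : ν ∈ Icc (0 : ℝ) 1) :
    Kc h ^ min ν (1 - ν) • x ^ ν ≤ (1 - ν) • 1 + ν • x := by
  have hx : 0 ≤ x := (smul_nonneg (by linarith) zero_le_one).trans hhx
  have hspec : ∀ t ∈ spectrum ℝ x, h ≤ t :=
    (algebraMap_le_iff_le_spectrum (.of_nonneg hx)).mp (by rwa [Algebra.algebraMap_eq_smul_one])
  have hcont : Continuous (fun t : ℝ => t ^ ν) := Real.continuous_rpow_const hν.1
  calc Kc h ^ min ν (1 - ν) • x ^ ν = cfc (fun t => Kc h ^ min ν (1 - ν) * t ^ ν) x := by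
        rw [rpow_eq_cfc_real, cfc_const_mul _ _ x hcont.continuousOn]
    _ ≤ cfc (fun t => 1 - ν + ν * t) x :=
        cfc_mono (fun t ht => Kc_rpow_min_mul_rpow_le_of_le hh (hspec t ht) hν)
    _ = (1 - ν) • 1 + ν • x := by
        rw [cfc_const_add (1 - ν) (fun t => ν * t) x, cfc_const_mul_id ν x,
          Algebra.algebraMap_eq_smul_one]

lemma rpow_half_conj_rpow_neg_half_conj {a : 𝒜} (ha : IsStrictlyPositive a) (b : 𝒜) :
    a ^ (1 / 2 : ℝ) * (a ^ (-(1 / 2) : ℝ) * b * a ^ (-(1 / 2) : ℝ)) * a ^ (1 / 2 : ℝ) = b := by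
  simp only [← mul_assoc, rpow_mul_rpow_neg (1 / 2 : ℝ) ha, one_mul]
  rw [mul_assoc, rpow_neg_mul_rpow (1 / 2 : ℝ) ha, mul_one]

lemma rpow_half_mul_rpow_half {a : 𝒜} (ha : 0 ≤ a) : a ^ (1 / 2 : ℝ) * a ^ (1 / 2 : ℝ) = a := by
  rw [← sqrt_eq_rpow, sqrt_mul_sqrt_self a]

lemma smul_sharp_le_of_smul_one_le {a b : 𝒜} {h ν : ℝ} (ha : IsStrictlyPositive a) (hh : 1 ≤ h)
    (hhab : h • 1 ≤ a ^ (-(1 / 2) : ℝ) * b * a ^ (-(1 / 2) : ℝ)) (hν : ν ∈ Icc (0 : ℝ) 1) :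
    Kc h ^ min ν (1 - ν) • sharp ν a b ≤ (1 - ν) • a + ν • b := by
  have := (IsSelfAdjoint.of_nonneg (rpow_nonneg (a := a) (y := 1 / 2))).conjugate_le_conjugate
    (Kc_rpow_min_smul_rpow_le hh hhab hν)
  rwa [mul_add, add_mul, mul_smul_comm, smul_mul_assoc, mul_smul_comm, smul_mul_assoc,
    mul_smul_comm, smul_mul_assoc, mul_one, rpow_half_mul_rpow_half ha.nonneg,
    rpow_half_conj_rpow_neg_half_conj ha] at this

lemma smul_one_le_rpow_half_mul_invOf_mul_rpow_half {a b : 𝒜} [Invertible b] {p q : ℝ}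
    (hp : 0 ≤ p) (hq : 0 < q) (hpa : p • 1 ≤ a) (hb : 0 ≤ b) (hbq : b ≤ q • 1) :
    (p / q) • (1 : 𝒜) ≤ a ^ (1 / 2 : ℝ) * ⅟b * a ^ (1 / 2 : ℝ) := by
  have ha : 0 ≤ a := (smul_nonneg hp zero_le_one).trans hpa
  have hqb : q⁻¹ • (1 : 𝒜) ≤ ⅟b := by
    have := CStarAlgebra.inv_le_inv (a := unitOfInvertible b)
      (b := Units.map (algebraMap ℝ 𝒜) (Units.mk0 q hq.ne')) hb
      (by simpa [Algebra.algebraMap_eq_smul_one] using hbq)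
    simpa [Algebra.algebraMap_eq_smul_one] using this
  calc (p / q) • (1 : 𝒜) = q⁻¹ • (p • 1) := by rw [smul_smul, div_eq_inv_mul]
    _ ≤ q⁻¹ • a := smul_le_smul_of_nonneg_left hpa (by positivity)
    _ = a ^ (1 / 2 : ℝ) * (q⁻¹ • 1) * a ^ (1 / 2 : ℝ) := by
        rw [mul_smul_comm, mul_one, smul_mul_assoc, rpow_half_mul_rpow_half ha]
    _ ≤ a ^ (1 / 2 : ℝ) * ⅟b * a ^ (1 / 2 : ℝ) :=
        (IsSelfAdjoint.of_nonneg rpow_nonneg).conjugate_le_conjugate hqb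

end CStarAlgebra

theorem stmt2_general {𝒜 : Type*} [CStarAlgebra 𝒜] [PartialOrder 𝒜] [StarOrderedRing 𝒜]
    (A B : 𝒜) [Invertible A] [Invertible B] (m m' M' ν : ℝ)
    (hm : 0 < m) (hmB : m • (1:𝒜) ≤ B) (hBm' : B ≤ m' • (1:𝒜)) (hm'M' : m' < M')
    (hM'A : M' • (1:𝒜) ≤ A) (hν : ν ∈ Set.Icc (0:ℝ) 1) :
    Kc (M' / m') ^ (min ν (1 - ν)) • sharp ν (⅟A) (⅟B) ≤ (1 - ν) • ⅟A + ν • ⅟B := by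
  nontriviality 𝒜
  have hm' : 0 < m' := hm.trans_le <| by
    simpa [← Algebra.algebraMap_eq_smul_one] using hmB.trans hBm'
  have hA : 0 ≤ A := (smul_nonneg (hm'.trans hm'M').le zero_le_one).trans hM'A
  have hA' : IsStrictlyPositive (⅟A) :=
    (unitOfInvertible A)⁻¹.isStrictlyPositive_of_le (inv_nonneg_of_nonneg _ hA)
  refine smul_sharp_le_of_smul_one_le hA' ((one_le_div hm').2 hm'M'.le) ?_ hν
  have hA_rpow : (⅟A) ^ (-(1 / 2) : ℝ) = A ^ (1 / 2 : ℝ) := by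
    simpa using rpow_neg (unitOfInvertible A)⁻¹ (1 / 2 : ℝ)
  rw [hA_rpow]
  exact smul_one_le_rpow_half_mul_invOf_mul_rpow_half (hm'.trans hm'M').le hm' hM'A
    ((smul_nonneg hm.le zero_le_one).trans hmB) hBm'

theorem stmt2 {𝒜 : Type*} [CStarAlgebra 𝒜] [PartialOrder 𝒜] [StarOrderedRing 𝒜]
    (A B : 𝒜) [Invertible A] [Invertible B] (m m' M' M ν : ℝ)
    (hm : 0 < m) (hmB : m • (1:𝒜) ≤ B) (hBm' : B ≤ m' • (1:𝒜)) (hm'M' : m' < M')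
    (hM'A : M' • (1:𝒜) ≤ A) (hAM : A ≤ M • (1:𝒜)) (hν : ν ∈ Set.Icc (0:ℝ) 1) :
    Kc (M' / m') ^ (min ν (1 - ν)) • sharp ν (⅟A) (⅟B) ≤ (1 - ν) • ⅟A + ν • ⅟B :=
  stmt2_general A B m m' M' ν hm hmB hBm' hm'M' hM'A hν
end

section
/- Let A, B be positive invertible operators with 0 < m ≤ A, B ≤ M, and ν ∈ [0,1]. Then (1−ν)A + νB + Mm((1−ν)A⁻¹ + νB⁻¹) ≤ (M+m)·I. -/
lemma key_ineq {𝒜 : Type*} [CStarAlgebra 𝒜] [PartialOrder 𝒜] [StarOrderedRing 𝒜]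
    (A : 𝒜) [Invertible A] (m M : ℝ) (hm : 0 < m)
    (hmA : m • (1:𝒜) ≤ A) (hAM : A ≤ M • (1:𝒜)) :
    A + (M * m) • ⅟A ≤ (M + m) • (1:𝒜) := by
  have hA0 : (0:𝒜) ≤ A := le_trans (smul_nonneg hm.le zero_le_one) hmA
  have hAsa : IsSelfAdjoint A := .of_nonneg hA0
  have halg : ∀ r : ℝ, algebraMap ℝ 𝒜 r = r • (1:𝒜) := fun r => Algebra.algebraMap_eq_smul_one r
  have hlo : ∀ x ∈ spectrum ℝ A, m ≤ x := by
    rw [← algebraMap_le_iff_le_spectrum (a := A) hAsa, halg]; exact hmA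
  have hhi : ∀ x ∈ spectrum ℝ A, x ≤ M := by
    rw [← le_algebraMap_iff_spectrum_le (a := A) hAsa, halg]; exact hAM
  have hne : ∀ x ∈ spectrum ℝ A, x ≠ 0 := fun x hx => (lt_of_lt_of_le hm (hlo x hx)).ne'
  have hinv : ContinuousOn (fun x : ℝ => x⁻¹) (spectrum ℝ A) :=
    ContinuousOn.inv₀ continuousOn_id hne
  have hcont : ContinuousOn (fun x : ℝ => x + (M * m) * x⁻¹) (spectrum ℝ A) := by
    apply ContinuousOn.add continuousOn_id
    exact (continuousOn_const.mul hinv)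
  have hAu : (⅟A : 𝒜) = ((unitOfInvertible A)⁻¹ : 𝒜ˣ) := rfl
  have h1 : cfc (fun x : ℝ => x + (M * m) * x⁻¹) A = A + (M * m) • ⅟A := by
    rw [cfc_add (a := A) (fun x : ℝ => x) (fun x : ℝ => (M * m) * x⁻¹) continuousOn_id
      ((continuousOn_const.mul hinv))]
    rw [cfc_id' ℝ A]
    congr 1
    rw [cfc_const_mul (M * m) (fun x : ℝ => x⁻¹) A hinv]
    rw [hAu, ← cfc_inv_id (R := ℝ) (unitOfInvertible A)]
    rfl
  have h2 : cfc (fun _ : ℝ => M + m) A = (M + m) • (1:𝒜) := by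
    rw [cfc_const _ _ hAsa, halg]
  calc A + (M * m) • ⅟A = cfc (fun x : ℝ => x + (M * m) * x⁻¹) A := h1.symm
    _ ≤ cfc (fun _ : ℝ => M + m) A := by
        apply cfc_mono (hf := hcont) (hg := continuousOn_const)
        intro x hx
        have hx0 : 0 < x := lt_of_lt_of_le hm (hlo x hx)
        have key : (M - x) * (x - m) / x ≥ 0 :=
          div_nonneg (mul_nonneg (by linarith [hhi x hx]) (by linarith [hlo x hx])) hx0.le
        have : (M - x) * (x - m) / x = (M + m) - (x + M * m * x⁻¹) := by
          field_simp; ring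
        linarith [this ▸ key]
    _ = (M + m) • (1:𝒜) := h2

theorem stmt3 {𝒜 : Type*} [CStarAlgebra 𝒜] [PartialOrder 𝒜] [StarOrderedRing 𝒜]
    (A B : 𝒜) [Invertible A] [Invertible B] (m M ν : ℝ) (hm : 0 < m)
    (hmA : m • (1:𝒜) ≤ A) (hAM : A ≤ M • (1:𝒜))
    (hmB : m • (1:𝒜) ≤ B) (hBM : B ≤ M • (1:𝒜)) (hν : ν ∈ Set.Icc (0:ℝ) 1) :
    ((1 - ν) • A + ν • B) + (M * m) • ((1 - ν) • ⅟A + ν • ⅟B) ≤ (M + m) • (1:𝒜) := by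
  obtain ⟨hν0, hν1⟩ := hν
  have hA := key_ineq A m M hm hmA hAM
  have hB := key_ineq B m M hm hmB hBM
  have h1 : (1 - ν) • (A + (M * m) • ⅟A) ≤ (1 - ν) • ((M + m) • (1:𝒜)) :=
    smul_le_smul_of_nonneg_left hA (by linarith)
  have h2 : ν • (B + (M * m) • ⅟B) ≤ ν • ((M + m) • (1:𝒜)) :=
    smul_le_smul_of_nonneg_left hB hν0
  calc ((1 - ν) • A + ν • B) + (M * m) • ((1 - ν) • ⅟A + ν • ⅟B)
      = (1 - ν) • (A + (M * m) • ⅟A) + ν • (B + (M * m) • ⅟B) := by module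
    _ ≤ (1 - ν) • ((M + m) • (1:𝒜)) + ν • ((M + m) • (1:𝒜)) := add_le_add h1 h2
    _ = (M + m) • (1:𝒜) := by module
end

section
/- For positive bounded operators A, B on a Hilbert space and 1 ≤ r < ∞, ‖A^r + B^r‖ ≤ ‖(A+B)^r‖. -/
/-!
Put `c = ‖A + B‖`. Since `0 ≤ A, B ≤ A + B`, the spectra of `A` and `B` lie in `[0, c]`, where the
convex function `x ^ r` stays below its chord `c ^ (r - 1) * x`. Hence
`A ^ r + B ^ r ≤ c ^ (r - 1) • (A + B)`, an operator of norm `c ^ r = ‖(A + B) ^ r‖`.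
-/

open scoped NNReal

lemma NNReal.rpow_sub_one_mul_self {r : ℝ} (hr : r ≠ 0) (x : ℝ≥0) :
    x ^ (r - 1) * x = x ^ r := by
  rw [← NNReal.rpow_add_one' (by simpa using hr), sub_add_cancel]

namespace CFC

variable {A : Type*} [NormedRing A] [StarRing A] [NormedAlgebra ℝ A]
  [PartialOrder A] [StarOrderedRing A] [NonnegSpectrumClass ℝ A]
  [IsometricContinuousFunctionalCalculus ℝ A IsSelfAdjoint]

lemma rpow_le_smul_self_of_nnnorm_le {a : A} {c : ℝ≥0} {r : ℝ} (hr : 1 ≤ r)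
    (hac : ‖a‖₊ ≤ c) (ha : 0 ≤ a := by cfc_tac) :
    a ^ r ≤ c ^ (r - 1) • a := by
  rw [rpow_def, ← cfc_smul_id (R := ℝ≥0) (c ^ (r - 1)) a]
  refine cfc_mono (fun x hx => ?_) (NNReal.continuous_rpow_const (by linarith)).continuousOn
  have hxc : x ≤ c := (IsometricContinuousFunctionalCalculus.spectrum_le a hx).trans hac
  calc x ^ r = x ^ (r - 1) * x := (NNReal.rpow_sub_one_mul_self (by positivity) x).symm
    _ ≤ c ^ (r - 1) * x := by gcongr

end CFC

theorem stmt6 {𝒜 : Type*} [CStarAlgebra 𝒜] [PartialOrder 𝒜] [StarOrderedRing 𝒜]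
    (A B : 𝒜) (hA : 0 ≤ A) (hB : 0 ≤ B) (r : ℝ) (hr : 1 ≤ r) :
    ‖CFC.rpow A r + CFC.rpow B r‖ ≤ ‖CFC.rpow (A + B) r‖ := by
  set c := ‖A + B‖₊
  have hAc : ‖A‖₊ ≤ c :=
    CStarAlgebra.nnnorm_le_nnnorm_of_nonneg_of_le hA (le_add_of_nonneg_right hB)
  have hBc : ‖B‖₊ ≤ c :=
    CStarAlgebra.nnnorm_le_nnnorm_of_nonneg_of_le hB (le_add_of_nonneg_left hA)
  have hsum : A ^ r + B ^ r ≤ c ^ (r - 1) • (A + B) := by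
    rw [smul_add]
    exact add_le_add (CFC.rpow_le_smul_self_of_nnnorm_le hr hAc)
      (CFC.rpow_le_smul_self_of_nnnorm_le hr hBc)
  rw [← coe_nnnorm, ← coe_nnnorm, NNReal.coe_le_coe]
  calc ‖A ^ r + B ^ r‖₊ ≤ ‖c ^ (r - 1) • (A + B)‖₊ :=
        CStarAlgebra.nnnorm_le_nnnorm_of_nonneg_of_le
          (add_nonneg CFC.rpow_nonneg CFC.rpow_nonneg) hsum
    _ = c ^ r := by
        rw [NNReal.smul_def, nnnorm_smul, NNReal.nnnorm_eq,
          NNReal.rpow_sub_one_mul_self (by positivity)]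
    _ = ‖(A + B) ^ r‖₊ := (CFC.nnnorm_rpow (A + B) (by positivity) (add_nonneg hA hB)).symm
end

section
/- If T is a positive operator with 0 < m ≤ T ≤ M, then M²m²T⁻² + T² ≤ (M² + m²)·I. -/
theorem stmt14 {𝒜 : Type*} [CStarAlgebra 𝒜] [PartialOrder 𝒜] [StarOrderedRing 𝒜]
    (T : 𝒜) [Invertible T] (m M : ℝ) (hm : 0 < m)
    (hmT : m • (1:𝒜) ≤ T) (hTM : T ≤ M • (1:𝒜)) :
    (M ^ 2 * m ^ 2) • (⅟T) ^ 2 + T ^ 2 ≤ (M ^ 2 + m ^ 2) • (1:𝒜) := by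
  have hT0 : (0:𝒜) ≤ T := le_trans (smul_nonneg hm.le zero_le_one) hmT
  have hT_sa : IsSelfAdjoint T := hT0.isSelfAdjoint
  -- spectrum bounds
  have hspec_lo : ∀ x ∈ spectrum ℝ T, m ≤ x := by
    rw [← algebraMap_le_iff_le_spectrum (R := ℝ) (a := T) hT_sa]
    rwa [Algebra.algebraMap_eq_smul_one]
  have hspec_hi : ∀ x ∈ spectrum ℝ T, x ≤ M := by
    rw [← le_algebraMap_iff_spectrum_le (R := ℝ) (a := T) hT_sa]
    rwa [Algebra.algebraMap_eq_smul_one]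
  -- key positivity via cfc
  have key : (0:𝒜) ≤ cfc (fun x : ℝ => (M ^ 2 + m ^ 2) * x ^ 2 - (x ^ 4 + M ^ 2 * m ^ 2)) T := by
    apply cfc_nonneg
    intro x hx
    have h1 := hspec_lo x hx
    have h2 := hspec_hi x hx
    have hx0 : 0 < x := lt_of_lt_of_le hm h1
    have hA : x ^ 2 ≤ M ^ 2 := by nlinarith
    have hB : m ^ 2 ≤ x ^ 2 := by nlinarith
    nlinarith [mul_nonneg (sub_nonneg.2 hA) (sub_nonneg.2 hB)]
  have hcfc : cfc (fun x : ℝ => (M ^ 2 + m ^ 2) * x ^ 2 - (x ^ 4 + M ^ 2 * m ^ 2)) T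
      = (M ^ 2 + m ^ 2) • T ^ 2 - (T ^ 4 + (M ^ 2 * m ^ 2) • 1) := by
    rw [cfc_sub _ _ T (by fun_prop) (by fun_prop)]
    congr 1
    · rw [cfc_const_mul _ _ T (by fun_prop), cfc_pow_id T 2]
    · rw [cfc_add (a := T) _ _ (by fun_prop) (by fun_prop), cfc_pow_id T 4, cfc_const _ T,
        Algebra.algebraMap_eq_smul_one]
  rw [hcfc, sub_nonneg] at key
  -- conjugate by ⅟T
  have hS_sa : IsSelfAdjoint (⅟T) := by
    have h : star (⅟T) * T = 1 := by
      have := congrArg star (mul_invOf_self T)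
      rwa [star_mul, star_one, hT_sa.star_eq] at this
    exact (invOf_eq_left_inv h).symm
  have conj := hS_sa.conjugate_le_conjugate key
  calc (M ^ 2 * m ^ 2) • (⅟T) ^ 2 + T ^ 2
      = ⅟T * (T ^ 4 + (M ^ 2 * m ^ 2) • 1) * ⅟T := by
        have h4 : ⅟T * T ^ 4 * ⅟T = T ^ 2 := by
          rw [show (T:𝒜) ^ 4 = T * T ^ 2 * T from by noncomm_ring,
            show ⅟T * (T * T ^ 2 * T) * ⅟T = ⅟T * T * T ^ 2 * (T * ⅟T) from by noncomm_ring,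
            invOf_mul_self, mul_invOf_self, one_mul, mul_one]
        rw [mul_add, add_mul, h4, mul_smul_comm, mul_one, smul_mul_assoc, ← sq, add_comm]
    _ ≤ ⅟T * ((M ^ 2 + m ^ 2) • T ^ 2) * ⅟T := conj
    _ = (M ^ 2 + m ^ 2) • (1:𝒜) := by
        rw [mul_smul_comm, smul_mul_assoc,
          show ⅟T * T ^ 2 * ⅟T = ⅟T * T * (T * ⅟T) from by noncomm_ring,
          invOf_mul_self, mul_invOf_self, one_mul]
end
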